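/- arXiv:2403.19815 — 2 statements merged into one kernel-verified Lean document; each statement's English description precedes it below -/
import Mathlib

section
/- Let F̃ be an elliptic Minkowski integrand. Let ν, n, w be unit vectors in ℝ^{n+1} such that w = a·n + b·ν for some real numbers a ≥ 0 and b ≥ 0 (i.e., w lies on the length-minimizing geodesic arc connecting n and ν). If ⟨∇F̃(w), n⟩ = ⟨∇F̃(ν), n⟩, then w = ν. -/
open RealInnerProductSpace

noncomputable section

/-- Euclidean space ℝ^{n+1}. -/
abbrev Euc (n : ℕ) := EuclideanSpace ℝ (Fin (n + 1))

/-- A Minkowski integrand: `F 0 = 0`, smooth away from the origin,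
positively 1-homogeneous, and positive on nonzero vectors. -/
def MinkowskiIntegrand (n : ℕ) (F : Euc n → ℝ) : Prop :=
  F 0 = 0 ∧ ContDiffOn ℝ (⊤ : ℕ∞) F {0}ᶜ ∧
    (∀ s : ℝ, 0 < s → ∀ x : Euc n, F (s • x) = s * F x) ∧
    ∀ x : Euc n, x ≠ 0 → 0 < F x

/-- Ellipticity: the second Fréchet derivative at any unit vector is positive definite
on the orthogonal complement of that vector. -/
def Elliptic (n : ℕ) (F : Euc n → ℝ) : Prop :=
  ∀ x v : Euc n, ‖x‖ = 1 → v ≠ 0 → ⟪x, v⟫ = 0 →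
    0 < iteratedFDeriv ℝ 2 F x ![v, v]

/-- The dual function `F^o(y) = sup {⟨y, ξ⟩ / F(ξ) : ‖ξ‖ = 1}`. -/
def dualF (n : ℕ) (F : Euc n → ℝ) (y : Euc n) : ℝ :=
  sSup {r : ℝ | ∃ ξ : Euc n, ‖ξ‖ = 1 ∧ r = ⟪y, ξ⟫ / F ξ}



section Aux
variable {n : ℕ} {F : Euc n → ℝ}

lemma cda2 (hsm : ContDiffOn ℝ (⊤ : ℕ∞) F {0}ᶜ) {x : Euc n} (hx : x ≠ 0) :
    ContDiffAt ℝ 2 F x :=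
  (hsm.contDiffAt (isOpen_compl_singleton.mem_nhds (by simpa using hx))).of_le (WithTop.coe_le_coe.mpr (le_top : (2:ℕ∞) ≤ ⊤))

lemma grad_cda (hsm : ContDiffOn ℝ (⊤ : ℕ∞) F {0}ᶜ) {x : Euc n} (hx : x ≠ 0) :
    ContDiffAt ℝ 1 (gradient F) x := by
  have h1 : ContDiffAt ℝ 1 (fderiv ℝ F) x :=
    (cda2 hsm hx).fderiv_right (by norm_num)
  exact ((InnerProductSpace.toDual ℝ (Euc n)).symm.contDiff.contDiffAt).comp x h1

lemma inner_grad (v : Euc n) {x : Euc n} :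
    ⟪gradient F x, v⟫ = fderiv ℝ F x v := by
  rw [gradient, InnerProductSpace.toDual_symm_apply]

lemma fderiv_homog (hsm : ContDiffOn ℝ (⊤ : ℕ∞) F {0}ᶜ)
    (hhom : ∀ s : ℝ, 0 < s → ∀ x : Euc n, F (s • x) = s * F x)
    {x : Euc n} (hx : x ≠ 0) {s : ℝ} (hs : 0 < s) :
    fderiv ℝ F (s • x) = fderiv ℝ F x := by
  have hsx : s • x ≠ 0 := smul_ne_zero hs.ne' hx
  have hds : DifferentiableAt ℝ F (s • x) := (cda2 hsm hsx).differentiableAt two_ne_zero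
  have hdx : DifferentiableAt ℝ F x := (cda2 hsm hx).differentiableAt two_ne_zero
  have h1 : HasFDerivAt (fun y : Euc n => s • y) (s • ContinuousLinearMap.id ℝ (Euc n)) x :=
    (hasFDerivAt_id x).const_smul s
  have hcomp : HasFDerivAt (fun y : Euc n => F (s • y))
      ((fderiv ℝ F (s • x)).comp (s • ContinuousLinearMap.id ℝ (Euc n))) x :=
    hds.hasFDerivAt.comp x h1
  have heqf : (fun y : Euc n => F (s • y)) = fun y => s * F y := funext fun y => hhom s hs y
  have hcomp2 : HasFDerivAt (fun y : Euc n => F (s • y)) (s • fderiv ℝ F x) x := by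
    rw [heqf]
    exact hdx.hasFDerivAt.const_smul s
  have h := hcomp.unique hcomp2
  ext v
  have hv := congrArg (fun L : Euc n →L[ℝ] ℝ => L v) h
  simp only [ContinuousLinearMap.coe_comp', Function.comp_apply,
    ContinuousLinearMap.smul_apply, ContinuousLinearMap.coe_id', id_eq] at hv
  have : fderiv ℝ F (s • x) (s • v) = s * fderiv ℝ F x v := hv
  rw [map_smul] at this
  simpa [smul_eq_mul] using mul_left_cancel₀ hs.ne' this

lemma grad_homog (hsm : ContDiffOn ℝ (⊤ : ℕ∞) F {0}ᶜ)
    (hhom : ∀ s : ℝ, 0 < s → ∀ x : Euc n, F (s • x) = s * F x)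
    {x : Euc n} (hx : x ≠ 0) {s : ℝ} (hs : 0 < s) :
    gradient F (s • x) = gradient F x := by
  apply ext_inner_right ℝ
  intro v
  rw [inner_grad, inner_grad, fderiv_homog hsm hhom hx hs]

lemma euler (hsm : ContDiffOn ℝ (⊤ : ℕ∞) F {0}ᶜ)
    (hhom : ∀ s : ℝ, 0 < s → ∀ x : Euc n, F (s • x) = s * F x)
    {x : Euc n} (hx : x ≠ 0) :
    ⟪gradient F x, x⟫ = F x := by
  rw [inner_grad]
  have h1 : HasDerivAt (fun t : ℝ => (1 + t) • x) x 0 := by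
    simpa using ((hasDerivAt_id (0:ℝ)).const_add 1).smul_const x
  have h2 := ((cda2 hsm hx).differentiableAt two_ne_zero).hasFDerivAt
  have hc : HasDerivAt (fun t : ℝ => F ((1 + t) • x)) (fderiv ℝ F x x) 0 := by
    have h2' : HasFDerivAt F (fderiv ℝ F x) ((fun t : ℝ => (1 + t) • x) 0) := by simpa using h2
    exact h2'.comp_hasDerivAt 0 h1
  have hc2 : HasDerivAt (fun t : ℝ => F ((1 + t) • x)) (F x) 0 := by
    have hev : (fun t : ℝ => (1 + t) * F x) =ᶠ[nhds (0:ℝ)] fun t => F ((1 + t) • x) := by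
      filter_upwards [eventually_gt_nhds (show (-1:ℝ) < 0 by norm_num)] with t ht
      rw [hhom (1 + t) (by linarith)]
    have : HasDerivAt (fun t : ℝ => (1 + t) * F x) (F x) 0 := by
      simpa using ((hasDerivAt_id (0:ℝ)).const_add 1).mul_const (F x)
    exact this.congr_of_eventuallyEq hev.symm
  exact hc.unique hc2

lemma fderiv_grad_inner (hsm : ContDiffOn ℝ (⊤ : ℕ∞) F {0}ᶜ) {x : Euc n} (hx : x ≠ 0) (u v : Euc n) :
    ⟪fderiv ℝ (gradient F) x u, v⟫ = fderiv ℝ (fderiv ℝ F) x u v := by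
  have h1 : ContDiffAt ℝ 1 (fderiv ℝ F) x := (cda2 hsm hx).fderiv_right (by norm_num)
  have hd : DifferentiableAt ℝ (fderiv ℝ F) x := h1.differentiableAt one_ne_zero
  let e : (Euc n →L[ℝ] ℝ) →L[ℝ] Euc n :=
    ((InnerProductSpace.toDual ℝ (Euc n)).symm.toContinuousLinearEquiv :
      (Euc n →L[ℝ] ℝ) ≃L[ℝ] Euc n).toContinuousLinearMap
  have he : HasFDerivAt (gradient F) (e.comp (fderiv ℝ (fderiv ℝ F) x)) x := by
    exact e.hasFDerivAt.comp x hd.hasFDerivAt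
  rw [he.fderiv]
  show ⟪(InnerProductSpace.toDual ℝ (Euc n)).symm (fderiv ℝ (fderiv ℝ F) x u), v⟫ = _
  rw [InnerProductSpace.toDual_symm_apply]

lemma fderiv_grad_self (hsm : ContDiffOn ℝ (⊤ : ℕ∞) F {0}ᶜ)
    (hhom : ∀ s : ℝ, 0 < s → ∀ x : Euc n, F (s • x) = s * F x)
    {x : Euc n} (hx : x ≠ 0) :
    fderiv ℝ (gradient F) x x = 0 := by
  have hg : DifferentiableAt ℝ (gradient F) x := (grad_cda hsm hx).differentiableAt one_ne_zero
  have h1 : HasDerivAt (fun t : ℝ => (1 + t) • x) x 0 := by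
    simpa using ((hasDerivAt_id (0:ℝ)).const_add 1).smul_const x
  have hc : HasDerivAt (fun t : ℝ => gradient F ((1 + t) • x)) (fderiv ℝ (gradient F) x x) 0 := by
    have h2' : HasFDerivAt (gradient F) (fderiv ℝ (gradient F) x)
        ((fun t : ℝ => (1 + t) • x) 0) := by simpa using hg.hasFDerivAt
    exact h2'.comp_hasDerivAt 0 h1
  have hc2 : HasDerivAt (fun t : ℝ => gradient F ((1 + t) • x)) 0 0 := by
    have hev : (fun _ : ℝ => gradient F x) =ᶠ[nhds (0:ℝ)] fun t => gradient F ((1 + t) • x) := by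
      filter_upwards [eventually_gt_nhds (show (-1:ℝ) < 0 by norm_num)] with t ht
      rw [grad_homog hsm hhom hx (show (0:ℝ) < 1 + t by linarith)]
    exact (hasDerivAt_const 0 (gradient F x)).congr_of_eventuallyEq hev.symm
  exact hc.unique hc2

lemma fderiv_grad_symm (hsm : ContDiffOn ℝ (⊤ : ℕ∞) F {0}ᶜ) {x : Euc n} (hx : x ≠ 0) (u v : Euc n) :
    ⟪fderiv ℝ (gradient F) x u, v⟫ = ⟪fderiv ℝ (gradient F) x v, u⟫ := by
  rw [fderiv_grad_inner hsm hx, fderiv_grad_inner hsm hx]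
  exact (cda2 hsm hx).isSymmSndFDerivAt (by simp) u v

lemma ellip_inner (hsm : ContDiffOn ℝ (⊤ : ℕ∞) F {0}ᶜ)
    (hFell : ∀ x v : Euc n, ‖x‖ = 1 → v ≠ 0 → ⟪x, v⟫ = 0 →
      0 < iteratedFDeriv ℝ 2 F x ![v, v])
    {x v : Euc n} (hx : ‖x‖ = 1) (hv : v ≠ 0) (hxv : ⟪x, v⟫ = 0) :
    0 < ⟪fderiv ℝ (gradient F) x v, v⟫ := by
  have h := hFell x v hx hv hxv
  rwa [iteratedFDeriv_two_apply, ← fderiv_grad_inner hsm (by simp [← norm_pos_iff, hx])] at h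

end Aux

set_option maxHeartbeats 4000000 in
theorem statement_15' {n : ℕ} (hn : 1 ≤ n) (F : Euc n → ℝ)
    (hF : (F 0 = 0 ∧ ContDiffOn ℝ (⊤ : ℕ∞) F {0}ᶜ ∧
      (∀ s : ℝ, 0 < s → ∀ x : Euc n, F (s • x) = s * F x) ∧
      ∀ x : Euc n, x ≠ 0 → 0 < F x))
    (hFell : ∀ x v : Euc n, ‖x‖ = 1 → v ≠ 0 → ⟪x, v⟫ = 0 →
      0 < iteratedFDeriv ℝ 2 F x ![v, v])
    (ν nn w : Euc n) (hν : ‖ν‖ = 1) (hnn : ‖nn‖ = 1) (hw : ‖w‖ = 1)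
    (hwab : ∃ a b : ℝ, 0 ≤ a ∧ 0 ≤ b ∧ w = a • nn + b • ν)
    (heq : ⟪gradient F w, nn⟫ = ⟪gradient F ν, nn⟫) :
    w = ν := by
  obtain ⟨hF0, hsm, hhom, hpos⟩ := hF
  obtain ⟨a, b, ha, hb, hwdef⟩ := hwab
  have hν0 : ν ≠ 0 := by intro h; rw [h] at hν; simp at hν
  have hnn0 : nn ≠ 0 := by intro h; rw [h] at hnn; simp at hnn
  -- Degenerate cases
  by_cases hdep1 : nn = ν
  · -- w = (a+b) • ν
    rw [hdep1] at hwdef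
    have : w = (a + b) • ν := by rw [hwdef, add_smul]
    have hab : |a + b| = 1 := by
      rw [this, norm_smul, hν, mul_one] at hw; exact hw
    rw [abs_of_nonneg (by linarith)] at hab
    rw [this, hab, one_smul]
  by_cases hdep2 : nn = -ν
  · rw [hdep2] at hwdef
    have hwv : w = (b - a) • ν := by rw [hwdef]; module
    have hab : |b - a| = 1 := by rw [hwv, norm_smul, hν, mul_one] at hw; exact hw
    rcases abs_eq (by norm_num : (0:ℝ) ≤ 1) |>.mp hab with h1 | h1
    · rw [hwv, h1, one_smul]
    · exfalso
      have hwνeq : w = -ν := by rw [hwv, h1]; module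
      rw [hwνeq, hdep2] at heq
      have e1 : ⟪gradient F (-ν), -ν⟫ = F (-ν) := euler hsm hhom (by simpa using hν0)
      have e2 : ⟪gradient F ν, -ν⟫ = -F ν := by
        rw [inner_neg_right, euler hsm hhom hν0]
      rw [e1, e2] at heq
      have := hpos (-ν) (by simpa using hν0)
      have := hpos ν hν0
      linarith
  -- Main case: nn and ν linearly independent
  obtain ⟨c, hcdef⟩ : ∃ c : ℝ, c = ⟪nn, ν⟫ := ⟨_, rfl⟩
  have hcle : |c| ≤ 1 := by
    have := abs_real_inner_le_norm nn ν
    rw [hnn, hν, mul_one] at this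
    rwa [hcdef]
  have hclt1 : c < 1 := by
    rcases lt_or_eq_of_le (abs_le.mp hcle).2 with h | h
    · exact h
    · exact absurd ((inner_eq_one_iff_of_norm_eq_one hnn hν).mp (hcdef ▸ h)) hdep1
  have hcgt1 : -1 < c := by
    rcases lt_or_eq_of_le (abs_le.mp hcle).1 with h | h
    · exact h
    · exfalso
      have : ⟪nn, -ν⟫ = (1:ℝ) := by rw [inner_neg_right, ← hcdef]; linarith
      exact hdep2 ((inner_eq_one_iff_of_norm_eq_one hnn (by simpa using hν)).mp this)
  obtain ⟨s, hsdef⟩ : ∃ s : ℝ, s = Real.sqrt (1 - c ^ 2) := ⟨_, rfl⟩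
  have hs2 : s ^ 2 = 1 - c ^ 2 := by rw [hsdef]; exact Real.sq_sqrt (by nlinarith)
  have hspos : 0 < s := by rw [hsdef]; exact Real.sqrt_pos.mpr (by nlinarith)
  obtain ⟨e, hedef⟩ : ∃ e : Euc n, e = s⁻¹ • (nn - c • ν) := ⟨_, rfl⟩
  have hinνnn : ⟪ν, nn⟫ = c := by rw [real_inner_comm, ← hcdef]
  have hνν : ⟪ν, ν⟫ = (1:ℝ) := by rw [real_inner_self_eq_norm_sq, hν]; norm_num
  have hνe : ⟪ν, e⟫ = 0 := by
    rw [hedef, real_inner_smul_right, inner_sub_right, real_inner_smul_right, hinνnn, hνν]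
    ring
  have hse : s • e = nn - c • ν := by
    rw [hedef, smul_smul, mul_inv_cancel₀ hspos.ne', one_smul]
  have hnndec : nn = c • ν + s • e := by rw [hse]; module
  have hee : ⟪e, e⟫ = (1:ℝ) := by
    have hnn2 : ⟪nn, nn⟫ = (1:ℝ) := by rw [real_inner_self_eq_norm_sq, hnn]; norm_num
    have hx : ⟪nn - c • ν, nn - c • ν⟫ = s ^ 2 := by
      simp only [inner_sub_left, inner_sub_right, real_inner_smul_left, real_inner_smul_right,
        hnn2, hνν, hinνnn, ← hcdef]
      rw [hs2]; ring
    rw [hedef, real_inner_smul_left, real_inner_smul_right, hx]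
    field_simp
  have hne : ‖e‖ = 1 := by
    have : ‖e‖ ^ 2 = 1 := by rw [← real_inner_self_eq_norm_sq, hee]
    nlinarith [norm_nonneg e]
  -- inner product helper
  have hip : ∀ p q p' q' : ℝ, ⟪p • ν + q • e, p' • ν + q' • e⟫ = p * p' + q * q' := by
    intro p q p' q'
    have h3 : ⟪e, ν⟫ = (0:ℝ) := by rw [real_inner_comm]; exact hνe
    simp only [inner_add_left, inner_add_right, real_inner_smul_left, real_inner_smul_right,
      hνν, hee, h3, hνe]
    ring
  -- the geodesic
  obtain ⟨γ, hγdef⟩ : ∃ γ : ℝ → Euc n, γ = fun θ => Real.cos θ • ν + Real.sin θ • e := ⟨_, rfl⟩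
  obtain ⟨γ', hγ'def⟩ : ∃ γ' : ℝ → Euc n, γ' = fun θ => (-Real.sin θ) • ν + Real.cos θ • e :=
    ⟨_, rfl⟩
  have hγnorm : ∀ θ, ‖γ θ‖ = 1 := by
    intro θ
    have h1 : ⟪γ θ, γ θ⟫ = (1:ℝ) := by
      rw [hγdef]; simp only []; rw [hip]
      nlinarith [Real.sin_sq_add_cos_sq θ]
    have : ‖γ θ‖ ^ 2 = 1 := by rw [← real_inner_self_eq_norm_sq, h1]
    nlinarith [norm_nonneg (γ θ)]
  have hγ0 : ∀ θ, γ θ ≠ 0 := by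
    intro θ h
    have := hγnorm θ
    rw [h] at this; simp at this
  have hγ'norm : ∀ θ, ‖γ' θ‖ = 1 := by
    intro θ
    have h1 : ⟪γ' θ, γ' θ⟫ = (1:ℝ) := by
      rw [hγ'def]; simp only []; rw [hip]; nlinarith [Real.sin_sq_add_cos_sq θ]
    have : ‖γ' θ‖ ^ 2 = 1 := by rw [← real_inner_self_eq_norm_sq, h1]
    nlinarith [norm_nonneg (γ' θ)]
  have hγ'0 : ∀ θ, γ' θ ≠ 0 := by
    intro θ h
    have := hγ'norm θ
    rw [h] at this; simp at this
  have hγperp : ∀ θ, ⟪γ θ, γ' θ⟫ = (0:ℝ) := by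
    intro θ; rw [hγdef, hγ'def]; simp only []; rw [hip]; ring
  obtain ⟨θ₀, hθ₀def⟩ : ∃ θ₀ : ℝ, θ₀ = Real.arccos c := ⟨_, rfl⟩
  have hcθ₀ : Real.cos θ₀ = c := by rw [hθ₀def]; exact Real.cos_arccos (by linarith) (by linarith)
  have hsθ₀ : Real.sin θ₀ = s := by rw [hθ₀def, Real.sin_arccos, hsdef, sq]
  have hθ₀pos : 0 < θ₀ := by rw [hθ₀def]; exact Real.arccos_pos.mpr hclt1
  have hθ₀ltπ : θ₀ < Real.pi := by
    rcases lt_or_eq_of_le (hθ₀def ▸ Real.arccos_le_pi c) with h | h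
    · exact h
    · rw [h, Real.cos_pi] at hcθ₀; linarith
  -- nn decomposition along the geodesic
  have hnnγ : ∀ θ, nn = Real.cos (θ₀ - θ) • γ θ + Real.sin (θ₀ - θ) • γ' θ := by
    intro θ
    have hc' : Real.cos θ₀ = Real.cos (θ₀ - θ) * Real.cos θ - Real.sin (θ₀ - θ) * Real.sin θ := by
      rw [← Real.cos_add]; ring_nf
    have hs' : Real.sin θ₀ = Real.sin (θ₀ - θ) * Real.cos θ + Real.cos (θ₀ - θ) * Real.sin θ := by
      rw [← Real.sin_add]; ring_nf
    rw [hnndec, ← hcθ₀, ← hsθ₀, hγdef, hγ'def, hc', hs']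
    simp only []
    module
  -- w on the geodesic
  obtain ⟨p, hpdef⟩ : ∃ p : ℝ, p = a * c + b := ⟨_, rfl⟩
  obtain ⟨q, hqdef⟩ : ∃ q : ℝ, q = a * s := ⟨_, rfl⟩
  have hq0 : 0 ≤ q := hqdef ▸ mul_nonneg ha hspos.le
  have hwpq : w = p • ν + q • e := by
    rw [hwdef, hnndec, hpdef, hqdef]; module
  have hpq1 : p ^ 2 + q ^ 2 = 1 := by
    have h1 : ⟪w, w⟫ = (1:ℝ) := by rw [real_inner_self_eq_norm_sq, hw]; norm_num
    rw [hwpq, hip] at h1; nlinarith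
  obtain ⟨φ, hφdef⟩ : ∃ φ : ℝ, φ = Real.arccos p := ⟨_, rfl⟩
  have hp1 : -1 ≤ p := by nlinarith
  have hp1' : p ≤ 1 := by nlinarith
  have hcφ : Real.cos φ = p := by rw [hφdef]; exact Real.cos_arccos hp1 hp1'
  have hsφ : Real.sin φ = q := by
    rw [hφdef, Real.sin_arccos]
    rw [show 1 - p ^ 2 = q ^ 2 by linarith]
    exact Real.sqrt_sq hq0
  have hwγ : w = γ φ := by rw [hγdef]; simp only []; rw [hcφ, hsφ, hwpq]
  have hφ0 : 0 ≤ φ := hφdef ▸ Real.arccos_nonneg p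
  have hφπ : φ ≤ Real.pi := hφdef ▸ Real.arccos_le_pi p
  have hφθ₀ : φ ≤ θ₀ := by
    have hsin : Real.sin (θ₀ - φ) = s * b := by
      rw [Real.sin_sub, hcφ, hsφ, hsθ₀, hcθ₀, hpdef, hqdef]; ring
    have hsin0 : 0 ≤ Real.sin (θ₀ - φ) := by rw [hsin]; positivity
    by_contra hcon
    push_neg at hcon
    have : Real.sin (θ₀ - φ) < 0 :=
      Real.sin_neg_of_neg_of_neg_pi_lt (by linarith) (by linarith)
    linarith
  -- the strictly monotone function
  obtain ⟨g, hgdef⟩ : ∃ g : ℝ → ℝ, g = fun θ => ⟪gradient F (γ θ), nn⟫ := ⟨_, rfl⟩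
  have hγder : ∀ θ, HasDerivAt γ (γ' θ) θ := by
    intro θ
    rw [hγdef, hγ'def]
    have h1 : HasDerivAt (fun t => Real.cos t • ν) ((-Real.sin θ) • ν) θ :=
      (Real.hasDerivAt_cos θ).smul_const ν
    have h2 : HasDerivAt (fun t => Real.sin t • e) (Real.cos θ • e) θ :=
      (Real.hasDerivAt_sin θ).smul_const e
    exact h1.add h2
  have hgder : ∀ θ, HasDerivAt g (⟪fderiv ℝ (gradient F) (γ θ) (γ' θ), nn⟫) θ := by
    intro θ
    rw [hgdef]
    have hgd : DifferentiableAt ℝ (gradient F) (γ θ) :=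
      (grad_cda hsm (hγ0 θ)).differentiableAt one_ne_zero
    have h1 : HasDerivAt (fun t => gradient F (γ t))
        (fderiv ℝ (gradient F) (γ θ) (γ' θ)) θ := by
      exact hgd.hasFDerivAt.comp_hasDerivAt θ (hγder θ)
    have h2 : HasDerivAt (fun _ : ℝ => nn) (0 : Euc n) θ := hasDerivAt_const θ nn
    have := h1.inner ℝ h2
    simpa using this
  have hderiv_val : ∀ θ, ⟪fderiv ℝ (gradient F) (γ θ) (γ' θ), nn⟫
      = Real.sin (θ₀ - θ) * ⟪fderiv ℝ (gradient F) (γ θ) (γ' θ), γ' θ⟫ := by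
    intro θ
    conv_lhs => rw [hnnγ θ]
    rw [inner_add_right, real_inner_smul_right, real_inner_smul_right]
    have hz : ⟪fderiv ℝ (gradient F) (γ θ) (γ' θ), γ θ⟫ = 0 := by
      rw [fderiv_grad_symm hsm (hγ0 θ), fderiv_grad_self hsm hhom (hγ0 θ)]
      simp
    rw [hz]; ring
  have hmono : StrictMonoOn g (Set.Icc 0 θ₀) := by
    apply strictMonoOn_of_deriv_pos (convex_Icc 0 θ₀)
    · exact fun θ _ => ((hgder θ).differentiableAt.continuousAt).continuousWithinAt
    · intro θ hθ
      rw [interior_Icc] at hθ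
      rw [(hgder θ).deriv, hderiv_val θ]
      have hsinpos : 0 < Real.sin (θ₀ - θ) :=
        Real.sin_pos_of_pos_of_lt_pi (by linarith [hθ.2]) (by linarith [hθ.1, hθ₀ltπ])
      have hellip : 0 < ⟪fderiv ℝ (gradient F) (γ θ) (γ' θ), γ' θ⟫ :=
        ellip_inner hsm hFell (hγnorm θ) (hγ'0 θ) (hγperp θ)
      positivity
  have hγ0ν : γ 0 = ν := by rw [hγdef]; simp
  have hgeq : g φ = g 0 := by
    rw [hgdef]; simp only []
    rw [← hwγ, hγ0ν]
    exact heq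
  have hφeq : φ = 0 :=
    hmono.injOn (Set.mem_Icc.mpr ⟨hφ0, hφθ₀⟩) (Set.mem_Icc.mpr ⟨le_rfl, hθ₀pos.le⟩) hgeq
  rw [hwγ, hφeq, hγ0ν]

theorem statement_15 {n : ℕ} (hn : 1 ≤ n) (F : Euc n → ℝ)
    (hF : MinkowskiIntegrand n F) (hFell : Elliptic n F)
    (ν nn w : Euc n) (hν : ‖ν‖ = 1) (hnn : ‖nn‖ = 1) (hw : ‖w‖ = 1)
    (hwab : ∃ a b : ℝ, 0 ≤ a ∧ 0 ≤ b ∧ w = a • nn + b • ν)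
    (heq : ⟪gradient F w, nn⟫ = ⟪gradient F ν, nn⟫) :
    w = ν :=
  statement_15' hn F hF hFell ν nn w hν hnn hw hwab heq
end
end

section
/- Let F̃ be an elliptic Minkowski integrand that is convex on ℝ^{n+1}. Let n₁, n₂ be linearly independent unit vectors and ν₀ a unit vector in ℝ^{n+1}, and set ω_i := ⟨∇F̃(ν₀), n_i⟩ for i = 1, 2. Suppose there exists a vector u ∈ ℝ^{n+1} with ⟨u, n₁⟩ = ⟨u, n₂⟩ = 0 and ⟨u, ν₀⟩ ≠ 0. Then there exists a vector k ∈ ℝ^{n+1} such that ⟨k, n_i⟩ = ω_i for i = 1, 2 and F^o(k) < 1. -/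
open RealInnerProductSpace

set_option maxHeartbeats 1000000

noncomputable section

section AuxLemmas
variable {n : ℕ} {F : Euc n → ℝ}

lemma contDiffAt_of_mink (hF : MinkowskiIntegrand n F) {x : Euc n} (hx : x ≠ 0) :
    ContDiffAt ℝ (⊤ : ℕ∞) F x :=
  hF.2.1.contDiffAt (isOpen_compl_singleton.mem_nhds (by simpa using hx))

lemma diffAt_of_mink (hF : MinkowskiIntegrand n F) {x : Euc n} (hx : x ≠ 0) :
    DifferentiableAt ℝ F x :=
  (contDiffAt_of_mink hF hx).differentiableAt (by simp)

lemma euler_of_mink (hF : MinkowskiIntegrand n F) {x : Euc n} (hx : x ≠ 0) :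
    fderiv ℝ F x x = F x := by
  have hd : HasFDerivAt F (fderiv ℝ F x) x := (diffAt_of_mink hF hx).hasFDerivAt
  have hline : HasDerivAt (fun s : ℝ => s • x) x 1 := by
    simpa using (hasDerivAt_id (1 : ℝ)).smul_const x
  have h1 : HasDerivAt (fun s : ℝ => F (s • x)) (fderiv ℝ F x x) 1 := by
    have hd' : HasFDerivAt F (fderiv ℝ F x) ((1:ℝ) • x) := by simpa using hd
    exact hd'.comp_hasDerivAt (x := (1 : ℝ)) hline
  have h2 : HasDerivAt (fun s : ℝ => s * F x) (F x) 1 := hasDerivAt_mul_const (F x)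
  have hev : (fun s : ℝ => F (s • x)) =ᶠ[nhds 1] fun s : ℝ => s * F x := by
    filter_upwards [eventually_gt_nhds one_pos] with s hs
    exact hF.2.2.1 s hs x
  exact (h1.congr_of_eventuallyEq hev.symm).unique h2

lemma line_hasDerivAt (x v : Euc n) : HasDerivAt (fun t : ℝ => x + t • v) v 0 := by
  simpa using ((hasDerivAt_id (0 : ℝ)).smul_const v).const_add x

lemma subgrad_of_mink (hF : MinkowskiIntegrand n F) (hconv : ConvexOn ℝ Set.univ F)
    {x : Euc n} (hx : x ≠ 0) (ξ : Euc n) : fderiv ℝ F x ξ ≤ F ξ := by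
  set v := ξ - x with hv
  set ψ : ℝ → ℝ := fun t => F (x + t • v) with hψ
  have hd : HasFDerivAt F (fderiv ℝ F x) x := (diffAt_of_mink hF hx).hasFDerivAt
  have hd' : HasFDerivAt F (fderiv ℝ F x) (x + (0:ℝ) • v) := by simpa using hd
  have hψd : HasDerivAt ψ (fderiv ℝ F x v) 0 :=
    hd'.comp_hasDerivAt (x := (0 : ℝ)) (line_hasDerivAt x v)
  have hslope : ∀ t ∈ Set.Ioo (0:ℝ) 1, slope ψ 0 t ≤ F ξ - F x := by
    intro t ht
    have hcomb : x + t • v = (1 - t) • x + t • ξ := by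
      rw [hv]; module
    have hc := hconv.2 (Set.mem_univ x) (Set.mem_univ ξ)
      (by linarith [ht.2] : (0:ℝ) ≤ 1 - t) ht.1.le (by ring)
    have hψt : ψ t ≤ (1 - t) * F x + t * F ξ := by
      rw [hψ]; simp only []; rw [hcomb]; simpa using hc
    have hψ0 : ψ 0 = F x := by simp [hψ]
    rw [slope_def_field, hψ0]
    rw [sub_zero, div_le_iff₀ ht.1]
    nlinarith [hψt]
  have htend : Filter.Tendsto (slope ψ 0) (nhdsWithin 0 (Set.Ioi 0)) (nhds (fderiv ℝ F x v)) :=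
    (hasDerivAt_iff_tendsto_slope.1 hψd).mono_left
      (nhdsWithin_mono _ (fun t ht => Set.mem_compl_singleton_iff.2 (ne_of_gt ht)))
  have hle : fderiv ℝ F x v ≤ F ξ - F x := by
    refine le_of_tendsto htend ?_
    filter_upwards [Ioo_mem_nhdsGT_of_mem (by constructor <;> norm_num : (0:ℝ) ∈ Set.Ico (0:ℝ) 1)] with t ht
    exact hslope t ht
  have : fderiv ℝ F x ξ = fderiv ℝ F x v + fderiv ℝ F x x := by
    rw [hv, map_sub]; ring
  rw [this, euler_of_mink hF hx]; linarith

lemma strict_of_mink (hF : MinkowskiIntegrand n F) (hFell : Elliptic n F)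
    (hconv : ConvexOn ℝ Set.univ F) {ν₀ ξ : Euc n}
    (hν₀ : ‖ν₀‖ = 1) (hξ : ‖ξ‖ = 1) (hne : ξ ≠ ν₀) :
    fderiv ℝ F ν₀ ξ < F ξ := by
  have hν0 : ν₀ ≠ 0 := fun h => by simp [h] at hν₀
  have hξ0 : ξ ≠ 0 := fun h => by simp [h] at hξ
  rcases lt_or_eq_of_le (subgrad_of_mink hF hconv hν0 ξ) with h | heq
  · exact h
  exfalso
  set D := fderiv ℝ F ν₀ with hD
  set φ : Euc n → ℝ := fun y => F y - D y with hφ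
  have hφ0 : ∀ y, 0 ≤ φ y := fun y => sub_nonneg.2 (subgrad_of_mink hF hconv hν0 y)
  have hφν : φ ν₀ = 0 := by simp [hφ, hD, euler_of_mink hF hν0]
  have hφξ : φ ξ = 0 := by simp [hφ, heq]
  have hξneg : ξ ≠ -ν₀ := by
    intro h
    have h1 : D (-ν₀) = -F ν₀ := by rw [map_neg, euler_of_mink hF hν0]
    have h2 : φ ξ = F (-ν₀) + F ν₀ := by rw [h, hφ]; simp [h1]
    have h3 := hF.2.2.2 (-ν₀) (neg_ne_zero.2 hν0)
    have h4 := hF.2.2.2 ν₀ hν0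
    rw [hφξ] at h2; linarith
  have hsegzero : ∀ a b : ℝ, 0 ≤ a → 0 ≤ b → a + b = 1 → φ (a • ν₀ + b • ξ) = 0 := by
    intro a b ha hb hab
    have hc := hconv.2 (Set.mem_univ ν₀) (Set.mem_univ ξ) ha hb hab
    have hDc : D (a • ν₀ + b • ξ) = a * D ν₀ + b * D ξ := by
      rw [map_add, map_smul, map_smul]; simp
    refine le_antisymm ?_ (hφ0 _)
    have : φ (a • ν₀ + b • ξ) ≤ a * φ ν₀ + b * φ ξ := by
      simp only [hφ, hDc]; simp only [smul_eq_mul] at hc; nlinarith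
    rw [hφν, hφξ] at this; linarith
  have hsegne : ∀ a b : ℝ, 0 ≤ a → 0 ≤ b → a + b = 1 → a • ν₀ + b • ξ ≠ 0 := by
    intro a b ha hb hab h
    have h' : a • ν₀ = b • (-ξ) := by
      rw [smul_neg, eq_neg_iff_add_eq_zero]; exact h
    have hnorm : a = b := by
      have := congrArg norm h'
      rwa [norm_smul, norm_smul, norm_neg, hν₀, hξ, mul_one, mul_one, Real.norm_eq_abs,
        Real.norm_eq_abs, abs_of_nonneg ha, abs_of_nonneg hb] at this
    have ha2 : a = 1/2 := by linarith
    have hb2 : b = 1/2 := by linarith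
    apply hξneg
    rw [ha2, hb2] at h
    have : ξ = -ν₀ := by
      have h2 := congrArg (fun z => (2:ℝ) • z) h
      simp only [smul_add, smul_smul] at h2
      norm_num at h2
      linear_combination (norm := module) h2
    exact this
  set v : Euc n := ξ - ν₀ with hv
  have hvne : v ≠ 0 := sub_ne_zero.2 hne
  set m : Euc n := (2:ℝ)⁻¹ • (ν₀ + ξ) with hm
  have hmseg : m = (2⁻¹:ℝ) • ν₀ + (2⁻¹:ℝ) • ξ := by rw [hm]; module
  have hm0 : m ≠ 0 := by rw [hmseg]; exact hsegne _ _ (by norm_num) (by norm_num) (by norm_num)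
  set s : ℝ := ‖m‖ with hs
  have hspos : 0 < s := norm_pos_iff.2 hm0
  set x : Euc n := s⁻¹ • m with hx
  have hx1 : ‖x‖ = 1 := by
    rw [hx, norm_smul, Real.norm_eq_abs, abs_of_nonneg (inv_nonneg.2 hspos.le), ← hs]
    field_simp
  have hx0 : x ≠ 0 := fun h => by simp [h] at hx1
  have hxv : ⟪x, v⟫ = 0 := by
    have h1 : ⟪ν₀ + ξ, ξ - ν₀⟫ = 0 := by
      rw [inner_sub_right, inner_add_left, inner_add_left,
        real_inner_self_eq_norm_mul_norm, real_inner_self_eq_norm_mul_norm,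
        real_inner_comm ξ ν₀, hν₀, hξ]
      ring
    rw [hx, hm, hv, real_inner_smul_left, real_inner_smul_left, h1]
    ring
  have key : ∀ t : ℝ, |t| ≤ (2*s)⁻¹ → φ (x + t • v) = 0 := by
    intro t ht
    have hs' : s ≠ 0 := ne_of_gt hspos
    have h1 : x + t • v = s⁻¹ • ((2⁻¹ - s*t) • ν₀ + (2⁻¹ + s*t) • ξ) := by
      rw [hx, hm, hv]
      match_scalars <;> field_simp <;> ring
    have habs := abs_le.1 ht
    have hst : s * |t| ≤ s * (2*s)⁻¹ := mul_le_mul_of_nonneg_left ht hspos.le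
    have hst2 : s * (2*s)⁻¹ = 2⁻¹ := by field_simp
    have h2 : |s * t| ≤ 2⁻¹ := by rw [abs_mul, abs_of_nonneg hspos.le]; linarith [hst, hst2]
    have habs2 := abs_le.1 h2
    have h3 := hsegzero (2⁻¹ - s*t) (2⁻¹ + s*t) (by linarith) (by linarith) (by ring)
    rw [h1, hφ]
    simp only
    rw [hF.2.2.1 s⁻¹ (inv_pos.2 hspos), map_smul]
    simp only [smul_eq_mul]
    have := h3
    rw [hφ] at this; simp only at this
    linear_combination s⁻¹ * this
  have hfd : ∀ t : ℝ, |t| ≤ (2*s)⁻¹ → fderiv ℝ F (x + t • v) = D := by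
    intro t ht
    have hs' : s ≠ 0 := ne_of_gt hspos
    have h1 : x + t • v = s⁻¹ • ((2⁻¹ - s*t) • ν₀ + (2⁻¹ + s*t) • ξ) := by
      rw [hx, hm, hv]
      match_scalars <;> field_simp <;> ring
    have hst : s * |t| ≤ s * (2*s)⁻¹ := mul_le_mul_of_nonneg_left ht hspos.le
    have hst2 : s * (2*s)⁻¹ = 2⁻¹ := by field_simp
    have h2 : |s * t| ≤ 2⁻¹ := by rw [abs_mul, abs_of_nonneg hspos.le]; linarith [hst]
    have habs2 := abs_le.1 h2
    have hpt0 : x + t • v ≠ 0 := by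
      rw [h1]
      exact smul_ne_zero (inv_ne_zero hs')
        (hsegne _ _ (by linarith) (by linarith) (by ring))
    have hmin : IsLocalMin φ (x + t • v) := by
      apply Filter.Eventually.of_forall
      intro y
      rw [key t ht]
      exact hφ0 y
    have hder := hmin.fderiv_eq_zero
    have hdiff := diffAt_of_mink hF hpt0
    have h4 : fderiv ℝ φ (x + t • v) = fderiv ℝ F (x + t • v) - D := by
      rw [hφ]
      rw [fderiv_fun_sub hdiff D.differentiableAt, D.fderiv]
    rw [h4] at hder
    exact sub_eq_zero.1 hder
  have hC2 : ContDiffAt ℝ (⊤ : ℕ∞) F x := contDiffAt_of_mink hF hx0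
  have hGdiff : DifferentiableAt ℝ (fderiv ℝ F) x :=
    (hC2.fderiv_right (m := 1) (by exact WithTop.coe_le_coe.2 le_top)).differentiableAt one_ne_zero
  have hGd : HasFDerivAt (fderiv ℝ F) (fderiv ℝ (fderiv ℝ F) x) x := hGdiff.hasFDerivAt
  have hGd' : HasFDerivAt (fderiv ℝ F) (fderiv ℝ (fderiv ℝ F) x) (x + (0:ℝ) • v) := by
    simpa using hGd
  have hcomp : HasDerivAt (fun t : ℝ => fderiv ℝ F (x + t • v))
      (fderiv ℝ (fderiv ℝ F) x v) 0 :=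
    hGd'.comp_hasDerivAt (x := (0:ℝ)) (line_hasDerivAt x v)
  have hconst : HasDerivAt (fun t : ℝ => fderiv ℝ F (x + t • v)) 0 0 := by
    have hev : (fun t : ℝ => fderiv ℝ F (x + t • v)) =ᶠ[nhds 0] fun _ => D := by
      have hpos2 : (0:ℝ) < (2*s)⁻¹ := by positivity
      filter_upwards [Metric.ball_mem_nhds (0:ℝ) hpos2] with t ht
      rw [Real.ball_eq_Ioo] at ht
      exact hfd t (abs_le.2 ⟨by linarith [ht.1], by linarith [ht.2]⟩)
    exact (hasDerivAt_const 0 D).congr_of_eventuallyEq hev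
  have hzero : fderiv ℝ (fderiv ℝ F) x v = 0 := hcomp.unique hconst
  have hpos := hFell x v hx1 hvne hxv
  rw [iteratedFDeriv_two_apply] at hpos
  simp only [Matrix.cons_val_zero, Matrix.cons_val_one, Matrix.head_cons, hzero] at hpos
  simp at hpos

end AuxLemmas

theorem statement_17 {n : ℕ} (hn : 2 ≤ n) (F : Euc n → ℝ)
    (hF : MinkowskiIntegrand n F) (hFell : Elliptic n F)
    (hconv : ConvexOn ℝ Set.univ F)
    (n₁ n₂ ν₀ : Euc n) (hn₁ : ‖n₁‖ = 1) (hn₂ : ‖n₂‖ = 1) (hν₀ : ‖ν₀‖ = 1)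
    (hind : LinearIndependent ℝ ![n₁, n₂])
    (u : Euc n) (hu₁ : ⟪u, n₁⟫ = 0) (hu₂ : ⟪u, n₂⟫ = 0)
    (huν : ⟪u, ν₀⟫ ≠ 0) :
    ∃ k : Euc n, ⟪k, n₁⟫ = ⟪gradient F ν₀, n₁⟫ ∧
      ⟪k, n₂⟫ = ⟪gradient F ν₀, n₂⟫ ∧ dualF n F k < 1 := by
  have hν0 : ν₀ ≠ 0 := fun h => by simp [h] at hν₀
  set D := fderiv ℝ F ν₀ with hD
  have hg : ∀ y : Euc n, ⟪gradient F ν₀, y⟫ = D y := fun y =>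
    InnerProductSpace.toDual_symm_apply
  -- choose the sign of u
  set u' : Euc n := if 0 < ⟪u, ν₀⟫ then u else -u with hu'
  have hu'ν : 0 < ⟪u', ν₀⟫ := by
    rw [hu']; split_ifs with h
    · exact h
    · rw [inner_neg_left]; cases' lt_or_gt_of_ne huν with h' h'
      · linarith
      · exact absurd h' h
  have hu'₁ : ⟪u', n₁⟫ = 0 := by rw [hu']; split_ifs <;> simp [inner_neg_left, hu₁]
  have hu'₂ : ⟪u', n₂⟫ = 0 := by rw [hu']; split_ifs <;> simp [inner_neg_left, hu₂]
  have hu'0 : u' ≠ 0 := fun h => by rw [h, inner_zero_left] at hu'ν; exact lt_irrefl 0 hu'ν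
  -- the sphere
  set S : Set (Euc n) := Metric.sphere (0 : Euc n) 1 with hS
  have hScomp : IsCompact S := isCompact_sphere 0 1
  have hSsub : S ⊆ ({0} : Set (Euc n))ᶜ := by
    intro ξ hξ
    rw [hS, mem_sphere_zero_iff_norm] at hξ
    simp only [Set.mem_compl_iff, Set.mem_singleton_iff]
    exact fun h => by simp [h] at hξ
  have hFcont : ContinuousOn F S := (hF.2.1.continuousOn).mono hSsub
  have hFpos : ∀ ξ : Euc n, ‖ξ‖ = 1 → 0 < F ξ := fun ξ hξ =>
    hF.2.2.2 ξ (fun h => by simp [h] at hξ)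
  -- the compact set K and the minimum δ
  set K : Set (Euc n) := S ∩ {ξ | ⟪u', ξ⟫ ≤ 0} with hK
  have hKcomp : IsCompact K := hScomp.inter_right
    (isClosed_le (continuous_const.inner continuous_id) continuous_const)
  have hKne : K.Nonempty := by
    refine ⟨-(‖u'‖⁻¹ • u'), ?_, ?_⟩
    · rw [hS, mem_sphere_zero_iff_norm, norm_neg, norm_smul, Real.norm_eq_abs,
        abs_of_nonneg (inv_nonneg.2 (norm_nonneg u')), inv_mul_cancel₀ (norm_ne_zero_iff.2 hu'0)]
    · simp only [Set.mem_setOf_eq, inner_neg_right, real_inner_smul_right,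
        real_inner_self_eq_norm_mul_norm]
      rw [neg_nonpos]
      positivity
  set φ : Euc n → ℝ := fun ξ => F ξ - D ξ with hφ
  have hφcont : ContinuousOn φ K :=
    (hFcont.mono Set.inter_subset_left).sub (D.continuous.continuousOn)
  obtain ⟨ξ₀, hξ₀K, hminK⟩ := hKcomp.exists_isMinOn hKne hφcont
  have hξ₀norm : ‖ξ₀‖ = 1 := by
    have := hξ₀K.1; rwa [hS, mem_sphere_zero_iff_norm] at this
  have hξ₀ne : ξ₀ ≠ ν₀ := by
    intro h
    have h2 : ⟪u', ξ₀⟫ ≤ 0 := hξ₀K.2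
    rw [h] at h2; linarith
  set δ : ℝ := φ ξ₀ with hδdef
  have hδ : 0 < δ := sub_pos.2 (strict_of_mink hF hFell hconv hν₀ hξ₀norm hξ₀ne)
  set t : ℝ := δ / (‖u'‖ + 1) with htdef
  have htpos : 0 < t := div_pos hδ (by positivity)
  have hteq : t * (‖u'‖ + 1) = δ := by
    rw [htdef]; field_simp
  -- the vector k
  refine ⟨gradient F ν₀ - t • u', ?_, ?_, ?_⟩
  · rw [inner_sub_left, real_inner_smul_left, hu'₁]; ring
  · rw [inner_sub_left, real_inner_smul_left, hu'₂]; ring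
  -- dual norm bound
  set k : Euc n := gradient F ν₀ - t • u' with hk
  have hkip : ∀ ξ : Euc n, ⟪k, ξ⟫ = D ξ - t * ⟪u', ξ⟫ := by
    intro ξ
    rw [hk, inner_sub_left, real_inner_smul_left, hg]
  have hlt : ∀ ξ : Euc n, ‖ξ‖ = 1 → ⟪k, ξ⟫ < F ξ := by
    intro ξ hξu
    have hξ0 : ξ ≠ 0 := fun h => by simp [h] at hξu
    rw [hkip]
    by_cases hcase : 0 < ⟪u', ξ⟫
    · have h1 := subgrad_of_mink hF hconv hν0 ξ
      nlinarith
    · push_neg at hcase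
      have hξK : ξ ∈ K := ⟨by rw [hS, mem_sphere_zero_iff_norm]; exact hξu, hcase⟩
      have h1 : δ ≤ F ξ - D ξ := hminK hξK
      have h2 : -⟪u', ξ⟫ ≤ ‖u'‖ := by
        have := abs_real_inner_le_norm u' ξ
        rw [hξu, mul_one] at this
        have := abs_le.1 this
        linarith [this.1]
      nlinarith
  -- the supremum
  set G : Euc n → ℝ := fun ξ => ⟪k, ξ⟫ / F ξ with hG
  have hGcont : ContinuousOn G S :=
    ((continuous_const.inner continuous_id).continuousOn).div hFcont
      (fun ξ hξ => ne_of_gt (hFpos ξ (by rwa [hS, mem_sphere_zero_iff_norm] at hξ)))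
  have hSne : S.Nonempty := ⟨ν₀, by rw [hS, mem_sphere_zero_iff_norm]; exact hν₀⟩
  obtain ⟨ξs, hξsS, hmax⟩ := hScomp.exists_isMaxOn hSne hGcont
  have hξsnorm : ‖ξs‖ = 1 := by rwa [hS, mem_sphere_zero_iff_norm] at hξsS
  set c : ℝ := max (G ξs) 0 with hc
  have hc1 : c < 1 := by
    apply max_lt _ one_pos
    rw [hG]
    exact (div_lt_one (hFpos ξs hξsnorm)).2 (hlt ξs hξsnorm)
  refine lt_of_le_of_lt ?_ hc1
  apply Real.sSup_le
  · rintro r ⟨ξ, hξ1, rfl⟩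
    have hξS : ξ ∈ S := by rw [hS, mem_sphere_zero_iff_norm]; exact hξ1
    exact le_trans (hmax hξS) (le_max_left _ _)
  · exact le_max_right _ _
end
end
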